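/- In the Setting below, assume q ≥ 1 and that Ω₁ = U₁ᵀΩ has rank k. Then for the matrix square root, ‖A^{1/2} − (Â_q)^{1/2}‖₂ ≤ √λ_{k+1} + γ^{q−1} ‖Λ₂^{1/2} Ω₂ Ω₁†‖₂, where ‖·‖₂ denotes the spectral norm and (Â_q)^{1/2} is the PSD square root of the Nyström approximation Â_q. -/

import Mathlib

open Matrix MeasureTheory ProbabilityTheory
open scoped ENNReal

namespace FunNystrom

/-- Frobenius norm of a real matrix. -/
noncomputable def frob {m k : Type*} [Fintype m] [Fintype k] (M : Matrix m k ℝ) : ℝ :=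
  Real.sqrt (∑ i, ∑ j, (M i j) ^ 2)

/-- Spectral norm (the ℓ²→ℓ² operator norm) of a real matrix. -/
noncomputable def specNorm {m k : Type*} [Fintype m] [Fintype k] [DecidableEq k]
    (M : Matrix m k ℝ) : ℝ :=
  ‖LinearMap.toContinuousLinearMap (Matrix.toEuclideanLin M)‖

/-- Schatten-`s` norm of a real matrix: the `ℓˢ` norm of its singular values
(the square roots of the eigenvalues of `Mᴴ * M`). -/
noncomputable def schatten {m k : Type*} [Fintype m] [Fintype k] [DecidableEq k]
    (s : ℝ) (M : Matrix m k ℝ) : ℝ :=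
  (∑ i, Real.sqrt ((Matrix.isHermitian_conjTranspose_mul_self M).eigenvalues i) ^ s) ^ s⁻¹

/-- `fB = f(B)`: the matrix function `f` applied to the symmetric matrix `B`, i.e.
`fB = V f(D) Vᵀ` for a spectral decomposition `B = V D Vᵀ` (the continuous
functional calculus, applied entrywise to the diagonal of `D`). -/
def IsMatFun {n : Type*} [Fintype n] [DecidableEq n]
    (f : ℝ → ℝ) (B fB : Matrix n n ℝ) : Prop :=
  ∃ (V : Matrix n n ℝ) (d : n → ℝ),
    V * Vᵀ = 1 ∧ Vᵀ * V = 1 ∧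
    B = V * Matrix.diagonal d * Vᵀ ∧
    fB = V * Matrix.diagonal (fun i => f (d i)) * Vᵀ

/-- `f` is operator monotone on `[0,∞)`: for all `m ≥ 1` and all `m × m` PSD
matrices `B ⪰ C` one has `f(B) ⪰ f(C)`. -/
def OpMonotoneOn (f : ℝ → ℝ) : Prop :=
  ∀ (m : ℕ) (B C fB fC : Matrix (Fin m) (Fin m) ℝ),
    B.PosSemidef → C.PosSemidef → (B - C).PosSemidef →
    IsMatFun f B fB → IsMatFun f C fC → (fB - fC).PosSemidef

/-- `P` is the orthogonal projection onto the column space of `M`: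
the unique symmetric idempotent matrix whose column space equals `range M`. -/
def IsProjOnto {n m : Type*} [Fintype n] [Fintype m] [DecidableEq n]
    (P : Matrix n n ℝ) (M : Matrix n m ℝ) : Prop :=
  Pᵀ = P ∧ P * P = P ∧
  LinearMap.range P.mulVecLin = LinearMap.range M.mulVecLin

/-- `A^r = U Λ^r Uᵀ` for the spectral decomposition `A = U Λ Uᵀ`
(diagonal entries raised to the `r`-th power). -/
noncomputable def apow {n : ℕ} (U : Matrix (Fin n) (Fin n) ℝ) (lam : Fin n → ℝ)
    (r : ℝ) : Matrix (Fin n) (Fin n) ℝ :=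
  U * Matrix.diagonal (fun i => lam i ^ r) * Uᵀ

/-- The index `k + i` in `Fin n`, for `i : Fin (n - k)`. -/
def tailIdx {n k : ℕ} (hkn : k < n) (i : Fin (n - k)) : Fin n :=
  ⟨k + i.1, by have := i.2; omega⟩

instance matMeasurableSpace {m k : Type*} : MeasurableSpace (Matrix m k ℝ) :=
  inferInstanceAs (MeasurableSpace (m → k → ℝ))

/-- The law of an `n × m` random matrix with i.i.d. standard Gaussian `N(0,1)`
entries: the product over all entries of the standard Gaussian measure on `ℝ`. -/
noncomputable def gaussianMatrix (n m : ℕ) : Measure (Matrix (Fin n) (Fin m) ℝ) :=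
  Measure.pi fun _ : Fin n => Measure.pi fun _ : Fin m => gaussianReal 0 1




/-- Euclidean norm of a plain vector. -/
noncomputable def enorm {m : Type*} [Fintype m] (v : m → ℝ) : ℝ :=
  Real.sqrt (v ⬝ᵥ v)

lemma dot_self_nonneg {m : Type*} [Fintype m] (v : m → ℝ) : 0 ≤ v ⬝ᵥ v :=
  Finset.sum_nonneg fun i _ => mul_self_nonneg _

lemma enorm_nonneg {m : Type*} [Fintype m] (v : m → ℝ) : 0 ≤ enorm v :=
  Real.sqrt_nonneg _

lemma enorm_eq {m : Type*} [Fintype m] (v : m → ℝ) :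
    enorm v = ‖((WithLp.equiv 2 (m → ℝ)).symm v : EuclideanSpace ℝ m)‖ := by
  rw [EuclideanSpace.norm_eq, enorm, dotProduct]
  congr 1
  refine Finset.sum_congr rfl fun i _ => ?_
  show v i * v i = ‖v i‖ ^ 2
  rw [Real.norm_eq_abs, sq_abs, sq]

lemma sq_enorm {m : Type*} [Fintype m] (v : m → ℝ) : enorm v ^ 2 = v ⬝ᵥ v :=
  Real.sq_sqrt (dot_self_nonneg v)

lemma enorm_le_enorm {m k : Type*} [Fintype m] [Fintype k] {v : m → ℝ} {w : k → ℝ}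
    (h : v ⬝ᵥ v ≤ w ⬝ᵥ w) : enorm v ≤ enorm w :=
  Real.sqrt_le_sqrt h

lemma enorm_neg {m : Type*} [Fintype m] (v : m → ℝ) : enorm (-v) = enorm v := by
  simp [enorm, dotProduct, neg_mul_neg]

lemma enorm_add_le {m : Type*} [Fintype m] (v w : m → ℝ) :
    enorm (v + w) ≤ enorm v + enorm w := by
  rw [enorm_eq, enorm_eq, enorm_eq]
  rw [show ((WithLp.equiv 2 (m → ℝ)).symm (v + w) : EuclideanSpace ℝ m)
      = (WithLp.equiv 2 (m → ℝ)).symm v + (WithLp.equiv 2 (m → ℝ)).symm w from rfl]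
  exact norm_add_le _ _

lemma enorm_mulVec_le {m k : Type*} [Fintype m] [Fintype k] [DecidableEq k]
    (M : Matrix m k ℝ) (v : k → ℝ) : enorm (M *ᵥ v) ≤ specNorm M * enorm v := by
  rw [enorm_eq, enorm_eq]
  exact (LinearMap.toContinuousLinearMap (Matrix.toEuclideanLin M)).le_opNorm ((WithLp.equiv 2 (k → ℝ)).symm v)

lemma specNorm_nonneg {m k : Type*} [Fintype m] [Fintype k] [DecidableEq k]
    (M : Matrix m k ℝ) : 0 ≤ specNorm M := norm_nonneg _

lemma specNorm_le {m k : Type*} [Fintype m] [Fintype k] [DecidableEq k]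
    (M : Matrix m k ℝ) {c : ℝ} (hc : 0 ≤ c)
    (h : ∀ v, enorm (M *ᵥ v) ≤ c * enorm v) : specNorm M ≤ c := by
  refine ContinuousLinearMap.opNorm_le_bound _ hc fun x => ?_
  have hx : x = (WithLp.equiv 2 (k → ℝ)).symm ((WithLp.equiv 2 (k → ℝ)) x) := rfl
  calc ‖LinearMap.toContinuousLinearMap (Matrix.toEuclideanLin M) x‖
      = enorm (M *ᵥ (WithLp.equiv 2 (k → ℝ)) x) := by
        rw [enorm_eq]
        congr 1
    _ ≤ c * enorm ((WithLp.equiv 2 (k → ℝ)) x) := h _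
    _ = c * ‖x‖ := by rw [enorm_eq]; rfl




section proj
variable {n : Type*} [Fintype n] [DecidableEq n] {P : Matrix n n ℝ}

/-- quadratic form identity for symmetric idempotent. -/
lemma dot_proj (hs : Pᵀ = P) (hi : P * P = P) (x : n → ℝ) :
    (P *ᵥ x) ⬝ᵥ (P *ᵥ x) = x ⬝ᵥ (P *ᵥ x) := by
  calc (P *ᵥ x) ⬝ᵥ (P *ᵥ x) = ((P *ᵥ x) ᵥ* P) ⬝ᵥ x := by rw [Matrix.dotProduct_mulVec]
    _ = (Pᵀ *ᵥ (P *ᵥ x)) ⬝ᵥ x := by rw [← Matrix.mulVec_transpose]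
    _ = ((Pᵀ * P) *ᵥ x) ⬝ᵥ x := by rw [Matrix.mulVec_mulVec]
    _ = (P *ᵥ x) ⬝ᵥ x := by rw [hs, hi]
    _ = x ⬝ᵥ (P *ᵥ x) := by rw [dotProduct_comm]

lemma dot_orthdecomp (hs : Pᵀ = P) (hi : P * P = P) (x : n → ℝ) :
    x ⬝ᵥ x = (P *ᵥ x) ⬝ᵥ (P *ᵥ x) + (x - P *ᵥ x) ⬝ᵥ (x - P *ᵥ x) := by
  have h := dot_proj hs hi x
  have h2 : (P *ᵥ x) ⬝ᵥ x = x ⬝ᵥ (P *ᵥ x) := dotProduct_comm _ _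
  simp only [dotProduct_sub, sub_dotProduct]
  linarith

/-- A symmetric idempotent is a contraction. -/
lemma enorm_proj_le (hs : Pᵀ = P) (hi : P * P = P) (x : n → ℝ) :
    enorm (P *ᵥ x) ≤ enorm x := by
  refine enorm_le_enorm ?_
  have := dot_orthdecomp hs hi x
  have := dot_self_nonneg (x - P *ᵥ x)
  linarith

/-- Projections minimize distance: if `u` is fixed by `P` then `‖x - Px‖ ≤ ‖x - u‖`. -/
lemma enorm_sub_proj_le (hs : Pᵀ = P) (hi : P * P = P) (x u : n → ℝ) (hu : P *ᵥ u = u) :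
    enorm (x - P *ᵥ x) ≤ enorm (x - u) := by
  refine enorm_le_enorm ?_
  have hdecomp : x - u = (x - P *ᵥ x) + (P *ᵥ (x - u)) := by
    rw [Matrix.mulVec_sub, hu]; abel
  have hcross : (x - P *ᵥ x) ⬝ᵥ (P *ᵥ (x - u)) = 0 := by
    calc (x - P *ᵥ x) ⬝ᵥ (P *ᵥ (x - u)) = ((x - P *ᵥ x) ᵥ* P) ⬝ᵥ (x - u) := by
          rw [Matrix.dotProduct_mulVec]
      _ = (Pᵀ *ᵥ (x - P *ᵥ x)) ⬝ᵥ (x - u) := by rw [← Matrix.mulVec_transpose]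
      _ = 0 := by
          rw [hs, Matrix.mulVec_sub, Matrix.mulVec_mulVec, hi, sub_self,
            zero_dotProduct]
  have hnn := dot_self_nonneg (P *ᵥ (x - u))
  calc (x - P *ᵥ x) ⬝ᵥ (x - P *ᵥ x)
      ≤ (x - P *ᵥ x) ⬝ᵥ (x - P *ᵥ x) + (P *ᵥ (x - u)) ⬝ᵥ (P *ᵥ (x - u)) := by linarith
    _ = (x - u) ⬝ᵥ (x - u) := by
        conv_rhs => rw [hdecomp]
        simp only [dotProduct_add, add_dotProduct]
        have h2 : (P *ᵥ (x - u)) ⬝ᵥ (x - P *ᵥ x) = (x - P *ᵥ x) ⬝ᵥ (P *ᵥ (x - u)) :=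
          dotProduct_comm _ _
        rw [h2, hcross]; ring
end proj

/-- diagonal mulVec bound. -/
lemma enorm_diagonal_le {n : Type*} [Fintype n] [DecidableEq n] {d : n → ℝ} {c : ℝ}
    (hc : 0 ≤ c) (hd : ∀ i, |d i| ≤ c) (x : n → ℝ) :
    enorm (Matrix.diagonal d *ᵥ x) ≤ c * enorm x := by
  have h : (Matrix.diagonal d *ᵥ x) ⬝ᵥ (Matrix.diagonal d *ᵥ x) ≤ (c^2) * (x ⬝ᵥ x) := by
    simp only [dotProduct, Matrix.mulVec_diagonal, Finset.mul_sum]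
    refine Finset.sum_le_sum fun i _ => ?_
    have h1 : d i * x i * (d i * x i) = d i ^2 * (x i * x i) := by ring
    have h2 : d i ^ 2 ≤ c ^ 2 := by
      rw [← sq_abs]
      exact pow_le_pow_left₀ (abs_nonneg _) (hd i) 2
    rw [h1]
    exact mul_le_mul_of_nonneg_right h2 (mul_self_nonneg _)
  have := enorm_le_enorm (w := fun i => c * x i) (v := Matrix.diagonal d *ᵥ x) ?_
  · refine le_trans this ?_
    have : (fun i => c * x i) = c • x := rfl
    rw [this, enorm, enorm]
    rw [smul_dotProduct, dotProduct_smul, smul_smul, smul_eq_mul,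
      Real.sqrt_mul (mul_self_nonneg c)]
    rw [Real.sqrt_mul_self hc]
  · refine le_trans h (le_of_eq ?_)
    simp only [dotProduct, smul_eq_mul, Finset.mul_sum]
    exact Finset.sum_congr rfl fun i _ => by ring

/-- orthogonal invariance. -/
lemma enorm_orth {n : Type*} [Fintype n] [DecidableEq n] {U : Matrix n n ℝ}
    (hU : Uᵀ * U = 1) (x : n → ℝ) : enorm (U *ᵥ x) = enorm x := by
  unfold enorm
  congr 1
  calc (U *ᵥ x) ⬝ᵥ (U *ᵥ x) = ((U *ᵥ x) ᵥ* U) ⬝ᵥ x := by rw [Matrix.dotProduct_mulVec]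
    _ = (Uᵀ *ᵥ (U *ᵥ x)) ⬝ᵥ x := by rw [← Matrix.mulVec_transpose]
    _ = ((Uᵀ * U) *ᵥ x) ⬝ᵥ x := by rw [Matrix.mulVec_mulVec]
    _ = x ⬝ᵥ x := by rw [hU, Matrix.one_mulVec]




def headIdx {n k : ℕ} (hkn : k < n) (j : Fin k) : Fin n :=
  ⟨j.1, lt_trans j.2 hkn⟩

lemma tailIdx_injective {n k : ℕ} (hkn : k < n) : Function.Injective (tailIdx hkn) := by
  intro a b h
  have h2 : (tailIdx hkn a).1 = (tailIdx hkn b).1 := congrArg Fin.val h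
  simp only [tailIdx] at h2
  exact Fin.ext (by omega)

lemma headIdx_injective {n k : ℕ} (hkn : k < n) : Function.Injective (headIdx hkn) := by
  intro a b h
  have h2 : (headIdx hkn a).1 = (headIdx hkn b).1 := congrArg Fin.val h
  exact Fin.ext h2

lemma sum_tail {n k : ℕ} (hkn : k < n) (f : Fin n → ℝ)
    (hf : ∀ i : Fin n, i.1 < k → f i = 0) :
    ∑ i, f i = ∑ j : Fin (n - k), f (tailIdx hkn j) := by
  have h1 : ∑ j : Fin (n - k), f (tailIdx hkn j)
      = ∑ i ∈ Finset.univ.image (tailIdx hkn), f i :=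
    (Finset.sum_image (fun a _ b _ h => tailIdx_injective hkn h)).symm
  rw [h1]
  refine (Finset.sum_subset (Finset.subset_univ _) fun i _ hi => ?_).symm
  refine hf i ?_
  by_contra hik
  push_neg at hik
  refine hi (Finset.mem_image.2 ⟨⟨i.1 - k, by omega⟩, Finset.mem_univ _, ?_⟩)
  exact Fin.ext (by simp only [tailIdx]; omega)

lemma sum_head_le {n k : ℕ} (hkn : k < n) (f : Fin n → ℝ) (hf : ∀ i, 0 ≤ f i) :
    ∑ j : Fin k, f (headIdx hkn j) ≤ ∑ i, f i := by
  have h1 : ∑ j : Fin k, f (headIdx hkn j)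
      = ∑ i ∈ Finset.univ.image (headIdx hkn), f i :=
    (Finset.sum_image (fun a _ b _ h => headIdx_injective hkn h)).symm
  rw [h1]
  exact Finset.sum_le_sum_of_subset_of_nonneg (Finset.subset_univ _) fun i _ _ => hf i




lemma enorm_mulVec_hermitian_le {n : ℕ} {D : Matrix (Fin n) (Fin n) ℝ} (hD : D.IsHermitian)
    {c : ℝ} (hc : 0 ≤ c) (h : ∀ i, |hD.eigenvalues i| ≤ c) (v : Fin n → ℝ) :
    enorm (D *ᵥ v) ≤ c * enorm v := by
  set V : Matrix (Fin n) (Fin n) ℝ := (hD.eigenvectorUnitary : Matrix (Fin n) (Fin n) ℝ) with hV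
  have hmem := hD.eigenvectorUnitary.2
  rw [Unitary.mem_iff] at hmem
  have h1 : star V * V = 1 := hmem.1
  have h2 : V * star V = 1 := hmem.2
  have hst : star V = Vᵀ := by
    rw [Matrix.star_eq_conjTranspose, Matrix.conjTranspose_eq_transpose_of_trivial]
  rw [hst] at h1 h2
  have hspec : D = V * Matrix.diagonal hD.eigenvalues * Vᵀ := by
    have := hD.spectral_theorem
    simp only [Unitary.conjStarAlgAut_apply, Unitary.coe_star] at this
    rw [← hst]
    exact this
  rw [hspec, ← Matrix.mulVec_mulVec, ← Matrix.mulVec_mulVec]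
  rw [enorm_orth (by rw [← hst]; exact h1) _]
  calc enorm (Matrix.diagonal hD.eigenvalues *ᵥ (Vᵀ *ᵥ v)) ≤ c * enorm (Vᵀ *ᵥ v) :=
        enorm_diagonal_le hc h _
    _ = c * enorm v := by
        rw [enorm_orth (U := Vᵀ) (by rw [Matrix.transpose_transpose]; exact h2) v]


lemma quadform_nonneg {n : Type*} [Fintype n] {M : Matrix n n ℝ} (hM : M.PosSemidef)
    (x : n → ℝ) : 0 ≤ x ⬝ᵥ (M *ᵥ x) := by
  have := hM.dotProduct_mulVec_nonneg x
  simpa using this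

lemma sqrt_diff_bound {n : ℕ} {S Shat P : Matrix (Fin n) (Fin n) ℝ}
    (hSsym : Sᵀ = S) (hSpsd : S.PosSemidef) (hShat : Shat.PosSemidef)
    (hPsym : Pᵀ = P) (hPidem : P * P = P)
    (hEq : S * S - Shat * Shat = S * (1 - P) * S)
    {c : ℝ} (hc : 0 ≤ c)
    (hkey : ∀ v, enorm (((1 - P) * S) *ᵥ v) ≤ c * enorm v) :
    ∀ v, enorm ((S - Shat) *ᵥ v) ≤ c * enorm v := by
  set D : Matrix (Fin n) (Fin n) ℝ := S - Shat with hDdef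
  have hShatsym : Shatᵀ = Shat := by
    rw [← Matrix.conjTranspose_eq_transpose_of_trivial, hShat.1.eq]
  have hDsym : Dᵀ = D := by
    rw [hDdef, Matrix.transpose_sub, hSsym, hShatsym]
  have hD : D.IsHermitian := by
    rw [Matrix.IsHermitian, Matrix.conjTranspose_eq_transpose_of_trivial, hDsym]
  refine enorm_mulVec_hermitian_le hD hc (fun i => ?_)
  set μ := hD.eigenvalues i with hμ
  set w : Fin n → ℝ := (WithLp.equiv 2 (Fin n → ℝ)) (hD.eigenvectorBasis i) with hw
  have hweig : D *ᵥ w = μ • w := hD.mulVec_eigenvectorBasis i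
  have hwnorm : enorm w = 1 := by
    rw [enorm_eq]
    have : ((WithLp.equiv 2 (Fin n → ℝ)).symm w : EuclideanSpace ℝ (Fin n))
        = hD.eigenvectorBasis i := rfl
    rw [this]
    exact hD.eigenvectorBasis.orthonormal.1 i
  have hwdot : w ⬝ᵥ w = 1 := by
    have := sq_enorm w
    rw [hwnorm] at this
    simpa using this.symm
  set t1 := w ⬝ᵥ (S *ᵥ w) with ht1
  set t2 := w ⬝ᵥ (Shat *ᵥ w) with ht2
  have ht1nn : 0 ≤ t1 := quadform_nonneg hSpsd w
  have ht2nn : 0 ≤ t2 := quadform_nonneg hShat w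
  -- quadratic form identity
  have hsplit : S * S - Shat * Shat = S * D + D * Shat := by
    rw [hDdef]; noncomm_ring
  have hq1 : w ⬝ᵥ ((S * D) *ᵥ w) = μ * t1 := by
    rw [← Matrix.mulVec_mulVec, hweig, Matrix.mulVec_smul, dotProduct_smul]
    rfl
  have hq2 : w ⬝ᵥ ((D * Shat) *ᵥ w) = μ * t2 := by
    rw [← Matrix.mulVec_mulVec, Matrix.dotProduct_mulVec, ← Matrix.mulVec_transpose,
      hDsym, hweig, smul_dotProduct]
    rfl
  have hq : w ⬝ᵥ ((S * S - Shat * Shat) *ᵥ w) = μ * (t1 + t2) := by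
    rw [hsplit, Matrix.add_mulVec, dotProduct_add, hq1, hq2]; ring
  -- the positive expression
  have h1Psym : (1 - P)ᵀ = 1 - P := by
    rw [Matrix.transpose_sub, Matrix.transpose_one, hPsym]
  have h1Pidem : (1 - P) * (1 - P) = 1 - P := by
    rw [Matrix.sub_mul, Matrix.mul_sub, Matrix.mul_sub, hPidem]
    simp only [Matrix.one_mul, Matrix.mul_one]
    abel
  have hqe : w ⬝ᵥ ((S * S - Shat * Shat) *ᵥ w) = enorm (((1 - P) * S) *ᵥ w) ^ 2 := by
    rw [hEq, sq_enorm]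
    have hy : ((1 - P) * S) *ᵥ w = (1 - P) *ᵥ (S *ᵥ w) := (Matrix.mulVec_mulVec _ _ _).symm
    rw [hy, dot_proj h1Psym h1Pidem (S *ᵥ w)]
    rw [← Matrix.mulVec_mulVec, ← Matrix.mulVec_mulVec]
    rw [Matrix.dotProduct_mulVec (v := w) , ← Matrix.mulVec_transpose, hSsym]
  have hqnn : 0 ≤ μ * (t1 + t2) := by
    rw [← hq, hqe]
    positivity
  -- rule out negative μ
  rcases lt_or_ge μ 0 with hneg | hpos
  · exfalso
    have hsum : t1 + t2 ≤ 0 := by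
      by_contra hpos'
      push_neg at hpos'
      nlinarith
    have ht1z : t1 = 0 := by linarith
    have ht2z : t2 = 0 := by linarith
    have hS0 : S *ᵥ w = 0 := by
      exact (hSpsd.dotProduct_mulVec_zero_iff w).1 (by simpa using ht1z)
    have hShat0 : Shat *ᵥ w = 0 := by
      exact (hShat.dotProduct_mulVec_zero_iff w).1 (by simpa using ht2z)
    have hD0 : D *ᵥ w = 0 := by
      rw [hDdef, Matrix.sub_mulVec, hS0, hShat0, sub_zero]
    rw [hweig] at hD0
    have : μ = 0 ∨ w = 0 := smul_eq_zero.1 hD0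
    rcases this with h | h
    · exact absurd h (ne_of_lt hneg)
    · rw [h] at hwdot; simp at hwdot
  · -- 0 ≤ μ
    have hmu_le_t1 : μ ≤ t1 := by
      have : w ⬝ᵥ (D *ᵥ w) = μ := by
        rw [hweig, dotProduct_smul, hwdot]; simp
      rw [hDdef, Matrix.sub_mulVec, dotProduct_sub] at this
      have ht : t1 - t2 = μ := this
      linarith
    have hsq : μ ^ 2 ≤ c ^ 2 := by
      have h1 : μ * μ ≤ μ * (t1 + t2) := by nlinarith
      have h2 : μ * (t1 + t2) ≤ c ^ 2 := by
        rw [← hq, hqe]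
        have := hkey w
        rw [hwnorm, mul_one] at this
        have h3 : enorm (((1 - P) * S) *ᵥ w) ^ 2 ≤ c ^ 2 :=
          pow_le_pow_left₀ (enorm_nonneg _) this 2
        exact h3
      calc μ ^ 2 = μ * μ := sq μ
        _ ≤ c ^ 2 := le_trans h1 h2
    rw [abs_of_nonneg hpos]
    nlinarith [hsq]


lemma psd_conj {n m : Type*} [Fintype n] [Fintype m] [DecidableEq n]
    {d : n → ℝ} (hd : ∀ i, 0 ≤ d i) (B : Matrix m n ℝ) :
    (B * Matrix.diagonal d * Bᵀ).PosSemidef := by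
  have h := (Matrix.posSemidef_diagonal_iff.mpr hd).mul_mul_conjTranspose_same B
  rwa [Matrix.conjTranspose_eq_transpose_of_trivial] at h

lemma UDU_mul {n : Type*} [Fintype n] [DecidableEq n] {U : Matrix n n ℝ}
    (hU' : Uᵀ * U = 1) (d e : n → ℝ) :
    (U * Matrix.diagonal d * Uᵀ) * (U * Matrix.diagonal e * Uᵀ)
      = U * Matrix.diagonal (fun i => d i * e i) * Uᵀ := by
  have : (U * Matrix.diagonal d * Uᵀ) * (U * Matrix.diagonal e * Uᵀ)
      = U * (Matrix.diagonal d * ((Uᵀ * U) * (Matrix.diagonal e * Uᵀ))) := by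
    simp only [Matrix.mul_assoc]
  rw [this, hU', Matrix.one_mul, ← Matrix.mul_assoc (Matrix.diagonal d),
    Matrix.diagonal_mul_diagonal, ← Matrix.mul_assoc]

lemma enorm_mulVec_emb {n k m : ℕ} (hkn : k < n) (N : Matrix (Fin n) (Fin m) ℝ)
    (N' : Matrix (Fin (n - k)) (Fin m) ℝ)
    (h0 : ∀ i : Fin n, i.1 < k → ∀ l, N i l = 0)
    (ht : ∀ j l, N (tailIdx hkn j) l = N' j l) (w : Fin m → ℝ) :
    enorm (N *ᵥ w) = enorm (N' *ᵥ w) := by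
  unfold enorm
  congr 1
  have hrow0 : ∀ i : Fin n, i.1 < k → (N *ᵥ w) i = 0 := by
    intro i hi
    simp only [Matrix.mulVec, dotProduct]
    exact Finset.sum_eq_zero fun l _ => by rw [h0 i hi l, zero_mul]
  have hrowt : ∀ j, (N *ᵥ w) (tailIdx hkn j) = (N' *ᵥ w) j := by
    intro j
    simp only [Matrix.mulVec, dotProduct]
    exact Finset.sum_congr rfl fun l _ => by rw [ht j l]
  rw [dotProduct, dotProduct]
  rw [sum_tail hkn _ (fun i hi => by rw [hrow0 i hi, zero_mul])]
  exact Finset.sum_congr rfl fun j _ => by rw [hrowt j]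

lemma isUnit_of_rank_mul {k p : ℕ} (Ω₁ : Matrix (Fin k) (Fin (k + p)) ℝ)
    (hrank : Ω₁.rank = k) : IsUnit (Ω₁ * Ω₁ᵀ) := by
  have h1 : (Ω₁ * Ω₁ᵀ).rank = k := by rw [Matrix.rank_self_mul_transpose, hrank]
  have h2 : LinearMap.range (Ω₁ * Ω₁ᵀ).mulVecLin = ⊤ := by
    apply Submodule.eq_top_of_finrank_eq
    rw [show Module.finrank ℝ ↥(LinearMap.range (Ω₁ * Ω₁ᵀ).mulVecLin) = (Ω₁ * Ω₁ᵀ).rank from rfl,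
      h1, Module.finrank_fin_fun]
  rw [← Matrix.mulVec_surjective_iff_isUnit]
  have hsurj : Function.Surjective ⇑(Ω₁ * Ω₁ᵀ).mulVecLin := LinearMap.range_eq_top.1 h2
  intro y
  obtain ⟨x, hx⟩ := hsurj y
  exact ⟨x, by rw [← Matrix.mulVecLin_apply]; exact hx⟩


set_option maxHeartbeats 1600000 in
/-- structural spectral-norm bound for the matrix square root
(`q ≥ 1`); `Shat` is the PSD square root of the Nyström approximation. -/
theorem funNystrom_sqrt_operator_structural {n k p : ℕ} (q : ℕ) (hq : 1 ≤ q)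
    (hk1 : 1 ≤ k) (hkn : k < n)
    (U : Matrix (Fin n) (Fin n) ℝ) (hU : U * Uᵀ = 1) (hU' : Uᵀ * U = 1)
    (lam : Fin n → ℝ) (hlam : Antitone lam) (hlam0 : ∀ i, 0 ≤ lam i)
    (hlamk : 0 < lam ⟨k - 1, by omega⟩)
    (A : Matrix (Fin n) (Fin n) ℝ) (hA : A = U * Matrix.diagonal lam * Uᵀ)
    (Ω : Matrix (Fin n) (Fin (k + p)) ℝ)
    (P : Matrix (Fin n) (Fin n) ℝ)
    (hP : IsProjOnto P (apow U lam ((q : ℝ) - 1/2) * Ω))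
    (Ahat : Matrix (Fin n) (Fin n) ℝ)
    (hAhat : Ahat = apow U lam (1/2) * P * apow U lam (1/2))
    (Ω₁ : Matrix (Fin k) (Fin (k + p)) ℝ)
    (hΩ₁ : Ω₁ = (Matrix.of fun (i : Fin n) (j : Fin k) => U i ⟨j.1, by have := j.2; omega⟩)ᵀ * Ω)
    (Ω₂ : Matrix (Fin (n - k)) (Fin (k + p)) ℝ)
    (hΩ₂ : Ω₂ = (Matrix.of fun (i : Fin n) (j : Fin (n - k)) => U i (tailIdx hkn j))ᵀ * Ω)
    (hrank : Ω₁.rank = k)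
    (Shat : Matrix (Fin n) (Fin n) ℝ) (hShat : Shat.PosSemidef)
    (hShatsq : Shat * Shat = Ahat) :
    specNorm (apow U lam (1/2) - Shat) ≤
      Real.sqrt (lam ⟨k, hkn⟩) +
      (lam ⟨k, hkn⟩ / lam ⟨k - 1, by omega⟩) ^ (q - 1) *
        specNorm ((Matrix.diagonal (fun i : Fin (n - k) => Real.sqrt (lam (tailIdx hkn i)))) * Ω₂ * (Ω₁ᵀ * (Ω₁ * Ω₁ᵀ)⁻¹)) := by
  classical
  have hq1 : (1 : ℝ) ≤ (q : ℝ) := by exact_mod_cast hq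
  have hm : ((q - 1 : ℕ) : ℝ) = (q : ℝ) - 1 := by
    push_cast [Nat.cast_sub hq]; ring
  -- abbreviations
  obtain ⟨lamk1, hlamk1def⟩ : ∃ xx : ℝ, xx = lam ⟨k, hkn⟩ := ⟨_, rfl⟩
  have hlamkpos : 0 < lam (⟨k - 1, by omega⟩ : Fin n) := hlamk
  obtain ⟨lamk, hlamkdef⟩ : ∃ xx : ℝ, xx = lam ⟨k - 1, by omega⟩ := ⟨_, rfl⟩
  have hlamk1nn : 0 ≤ lamk1 := by rw [hlamk1def]; exact hlam0 _
  have hlamkpos' : 0 < lamk := by rw [hlamkdef]; exact hlamk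
  have hlamknn : 0 ≤ lamk := le_of_lt hlamkpos'
  have hlamk_le_head : ∀ l : Fin k, lamk ≤ lam (headIdx hkn l) := by
    intro l
    rw [hlamkdef]
    refine hlam ?_
    show (headIdx hkn l) ≤ (⟨k - 1, by omega⟩ : Fin n)
    have := l.2
    simp only [headIdx, Fin.mk_le_mk]
    omega
  have hheadpos : ∀ l : Fin k, 0 < lam (headIdx hkn l) :=
    fun l => lt_of_lt_of_le hlamkpos' (hlamk_le_head l)
  have htail_le : ∀ j : Fin (n - k), lam (tailIdx hkn j) ≤ lamk1 := by
    intro j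
    rw [hlamk1def]
    refine hlam ?_
    show (⟨k, hkn⟩ : Fin n) ≤ tailIdx hkn j
    simp only [tailIdx, Fin.mk_le_mk]
    omega
  have htailnn : ∀ j : Fin (n - k), 0 ≤ lam (tailIdx hkn j) := fun j => hlam0 _
  -- pseudoinverse
  obtain ⟨W, hWdef⟩ : ∃ xx : Matrix (Fin (k + p)) (Fin k) ℝ, xx = Ω₁ᵀ * (Ω₁ * Ω₁ᵀ)⁻¹ := ⟨_, rfl⟩
  have hunit : IsUnit (Ω₁ * Ω₁ᵀ) := isUnit_of_rank_mul Ω₁ hrank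
  have hudet : IsUnit (Ω₁ * Ω₁ᵀ).det := (Matrix.isUnit_iff_isUnit_det _).1 hunit
  have hΩ₁W : Ω₁ * W = 1 := by
    rw [hWdef, ← Matrix.mul_assoc, Matrix.mul_nonsing_inv _ hudet]
  -- target norm
  obtain ⟨F', hF'def⟩ : ∃ xx : Matrix (Fin (n - k)) (Fin k) ℝ, xx =  (Matrix.diagonal (fun i : Fin (n - k) => Real.sqrt (lam (tailIdx hkn i)))) * Ω₂ * W := ⟨_, rfl⟩
  obtain ⟨c, hcdef⟩ : ∃ xx : ℝ, xx = Real.sqrt lamk1 + (lamk1 / lamk) ^ (q - 1) * specNorm F' := ⟨_, rfl⟩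
  have hγnn : 0 ≤ (lamk1 / lamk) ^ (q - 1) := pow_nonneg (div_nonneg hlamk1nn hlamknn) _
  have hcnn : 0 ≤ c := by
    rw [hcdef]
    exact add_nonneg (Real.sqrt_nonneg _) (mul_nonneg hγnn (specNorm_nonneg _))
  -- rows of Uᵀ * Ω
  have hrow1 : ∀ (j : Fin k) (c' : Fin (k + p)), (Uᵀ * Ω) (headIdx hkn j) c' = Ω₁ j c' := by
    intro j c'
    rw [hΩ₁]
    simp only [Matrix.mul_apply, Matrix.transpose_apply, Matrix.of_apply]
    rfl
  have hrow2 : ∀ (j : Fin (n - k)) (c' : Fin (k + p)),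
      (Uᵀ * Ω) (tailIdx hkn j) c' = Ω₂ j c' := by
    intro j c'
    rw [hΩ₂]
    simp only [Matrix.mul_apply, Matrix.transpose_apply, Matrix.of_apply]
  -- the M matrix and its rows
  obtain ⟨M, hMdef⟩ : ∃ xx : Matrix (Fin n) (Fin k) ℝ, xx = (Uᵀ * Ω) * W := ⟨_, rfl⟩
  have hMhead : ∀ j l, M (headIdx hkn j) l = (1 : Matrix (Fin k) (Fin k) ℝ) j l := by
    intro j l
    rw [show (1 : Matrix (Fin k) (Fin k) ℝ) j l = (Ω₁ * W) j l from by rw [hΩ₁W]]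
    rw [hMdef, Matrix.mul_apply, Matrix.mul_apply]
    exact Finset.sum_congr rfl fun c' _ => by rw [hrow1 j c']
  have hMtail : ∀ j l, M (tailIdx hkn j) l = (Ω₂ * W) j l := by
    intro j l
    rw [hMdef, Matrix.mul_apply, Matrix.mul_apply]
    exact Finset.sum_congr rfl fun c' _ => by rw [hrow2 j c']
  -- the Z matrix
  obtain ⟨Z, hZdef⟩ : ∃ xx : Matrix (Fin n) (Fin k) ℝ, xx =  Matrix.diagonal (fun i => lam i ^ ((q : ℝ) - 1/2)) * M * Matrix.diagonal (fun j : Fin k => lam (headIdx hkn j) ^ ((1 : ℝ)/2 - (q : ℝ))) := ⟨_, rfl⟩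
  have hZapp : ∀ i l, Z i l = lam i ^ ((q : ℝ) - 1/2) * M i l *
      lam (headIdx hkn l) ^ ((1 : ℝ)/2 - (q : ℝ)) := by
    intro i l
    rw [hZdef, Matrix.mul_diagonal, Matrix.diagonal_mul]
  have hZhead : ∀ j l, Z (headIdx hkn j) l = (1 : Matrix (Fin k) (Fin k) ℝ) j l := by
    intro j l
    rw [hZapp, hMhead]
    simp only [Matrix.one_apply]
    by_cases hjl : j = l
    · subst hjl
      rw [if_pos rfl, mul_one, ← Real.rpow_add (hheadpos j)]
      norm_num
    · rw [if_neg hjl, mul_zero, zero_mul]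
  have hZtail : ∀ j l, Z (tailIdx hkn j) l = lam (tailIdx hkn j) ^ ((q : ℝ) - 1/2) *
      (Ω₂ * W) j l * lam (headIdx hkn l) ^ ((1 : ℝ)/2 - (q : ℝ)) := by
    intro j l
    rw [hZapp, hMtail]
  -- mulVec of Z picks out coordinates on head rows
  have hZx_head : ∀ (x : Fin k → ℝ) (j : Fin k), (Z *ᵥ x) (headIdx hkn j) = x j := by
    intro x j
    calc (Z *ᵥ x) (headIdx hkn j) = ∑ l, Z (headIdx hkn j) l * x l := rfl
      _ = ∑ l, (1 : Matrix (Fin k) (Fin k) ℝ) j l * x l :=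
          Finset.sum_congr rfl fun l _ => by rw [hZhead]
      _ = ((1 : Matrix (Fin k) (Fin k) ℝ) *ᵥ x) j := rfl
      _ = x j := by rw [Matrix.one_mulVec]
  -- Zᵀ * Z is positive definite, hence invertible
  have hZTZpd : (Zᵀ * Z).PosDef := by
    refine Matrix.PosDef.of_dotProduct_mulVec_pos ?_ (fun x hx => ?_)
    · show (Zᵀ * Z)ᴴ = Zᵀ * Z
      rw [Matrix.conjTranspose_eq_transpose_of_trivial, Matrix.transpose_mul,
        Matrix.transpose_transpose]
    · have h1 : star x ⬝ᵥ ((Zᵀ * Z) *ᵥ x) = (Z *ᵥ x) ⬝ᵥ (Z *ᵥ x) := by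
        rw [star_trivial, ← Matrix.mulVec_mulVec, Matrix.dotProduct_mulVec,
          ← Matrix.mulVec_transpose, Matrix.transpose_transpose]
      rw [h1]
      have h2 : ∑ j : Fin k, (Z *ᵥ x) (headIdx hkn j) * (Z *ᵥ x) (headIdx hkn j)
          ≤ (Z *ᵥ x) ⬝ᵥ (Z *ᵥ x) :=
        sum_head_le hkn (fun i => (Z *ᵥ x) i * (Z *ᵥ x) i) fun i => mul_self_nonneg _
      have h3 : ∑ j : Fin k, (Z *ᵥ x) (headIdx hkn j) * (Z *ᵥ x) (headIdx hkn j)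
          = x ⬝ᵥ x := by
        rw [dotProduct]
        exact Finset.sum_congr rfl fun j _ => by rw [hZx_head]
      have h4 : 0 < x ⬝ᵥ x := by
        rcases lt_or_eq_of_le (dot_self_nonneg x) with h | h
        · exact h
        · exact absurd (dotProduct_self_eq_zero.1 h.symm) hx
      linarith
  have hZTZdet : IsUnit (Zᵀ * Z).det := (ne_of_gt hZTZpd.det_pos).isUnit
  -- the projection Q onto range Z
  obtain ⟨Q, hQdef⟩ : ∃ xx : Matrix (Fin n) (Fin n) ℝ, xx = Z * (Zᵀ * Z)⁻¹ * Zᵀ := ⟨_, rfl⟩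
  have hQsym : Qᵀ = Q := by
    rw [hQdef, Matrix.transpose_mul, Matrix.transpose_mul, Matrix.transpose_transpose,
      Matrix.transpose_nonsing_inv, Matrix.transpose_mul, Matrix.transpose_transpose,
      Matrix.mul_assoc]
  have hQZ : Q * Z = Z := by
    rw [hQdef]
    calc Z * (Zᵀ * Z)⁻¹ * Zᵀ * Z = Z * ((Zᵀ * Z)⁻¹ * (Zᵀ * Z)) := by
          simp only [Matrix.mul_assoc]
      _ = Z := by rw [Matrix.nonsing_inv_mul _ hZTZdet, Matrix.mul_one]
  have hQidem : Q * Q = Q := by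
    have h1 : Q * Q = (Q * Z) * ((Zᵀ * Z)⁻¹ * Zᵀ) := by
      rw [hQdef]; simp only [Matrix.mul_assoc]
    rw [h1, hQZ, hQdef, Matrix.mul_assoc]
  have h1Qsym : (1 - Q)ᵀ = 1 - Q := by
    rw [Matrix.transpose_sub, Matrix.transpose_one, hQsym]
  have h1Qidem : (1 - Q) * (1 - Q) = 1 - Q := by
    rw [Matrix.sub_mul, Matrix.mul_sub, Matrix.mul_sub, hQidem]
    simp only [Matrix.one_mul, Matrix.mul_one]
    abel
  have h1QZ : (1 - Q) * Z = 0 := by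
    rw [Matrix.sub_mul, Matrix.one_mul, hQZ, sub_self]
  have hQrange : ∀ x, Q *ᵥ x = Z *ᵥ (((Zᵀ * Z)⁻¹ * Zᵀ) *ᵥ x) := by
    intro x
    rw [Matrix.mulVec_mulVec, hQdef, Matrix.mul_assoc]
  -- the rotated projection P' = Uᵀ P U
  obtain ⟨P', hP'def⟩ : ∃ xx : Matrix (Fin n) (Fin n) ℝ, xx = Uᵀ * P * U := ⟨_, rfl⟩
  have hP'sym : P'ᵀ = P' := by
    rw [hP'def, Matrix.transpose_mul, Matrix.transpose_mul, Matrix.transpose_transpose,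
      hP.1, Matrix.mul_assoc]
  have hP'idem : P' * P' = P' := by
    have h1 : P' * P' = Uᵀ * (P * (U * Uᵀ) * P) * U := by
      rw [hP'def]; simp only [Matrix.mul_assoc]
    rw [h1, hU, Matrix.mul_one, hP.2.1, hP'def, Matrix.mul_assoc]
  -- Z is in the range of the sketch, hence fixed by P'
  have hUZ : U * Z = (apow U lam ((q : ℝ) - 1/2) * Ω) *
      (W * Matrix.diagonal (fun j : Fin k => lam (headIdx hkn j) ^ ((1 : ℝ)/2 - (q : ℝ)))) := by
    rw [hZdef, hMdef, apow]
    simp only [Matrix.mul_assoc]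
  have hP'Z : ∀ x, P' *ᵥ (Z *ᵥ x) = Z *ᵥ x := by
    intro x
    obtain ⟨y, hydef⟩ : ∃ xx : Fin n → ℝ, xx = (apow U lam ((q : ℝ) - 1/2) * Ω) *ᵥ ((W * Matrix.diagonal (fun j : Fin k => lam (headIdx hkn j) ^ ((1 : ℝ)/2 - (q : ℝ)))) *ᵥ x) := ⟨_, rfl⟩
    have hymem : y ∈ LinearMap.range (apow U lam ((q : ℝ) - 1/2) * Ω).mulVecLin :=
      ⟨(W * Matrix.diagonal (fun j : Fin k => lam (headIdx hkn j) ^ ((1 : ℝ)/2 - (q : ℝ)))) *ᵥ x,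
        (Matrix.mulVecLin_apply _ _).trans hydef.symm⟩
    rw [← hP.2.2] at hymem
    obtain ⟨u, hu⟩ := hymem
    rw [Matrix.mulVecLin_apply] at hu
    have hPy : P *ᵥ y = y := by
      rw [← hu, Matrix.mulVec_mulVec, hP.2.1]
    have hZmat : Z = Uᵀ * ((apow U lam ((q : ℝ) - 1/2) * Ω) *
        (W * Matrix.diagonal (fun j : Fin k => lam (headIdx hkn j) ^ ((1 : ℝ)/2 - (q : ℝ))))) := by
      rw [← hUZ, ← Matrix.mul_assoc, hU', Matrix.one_mul]
    have hZxy : Z *ᵥ x = Uᵀ *ᵥ y := by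
      rw [hydef, hZmat]
      simp only [Matrix.mulVec_mulVec]
    rw [hZxy, hP'def]
    calc (Uᵀ * P * U) *ᵥ (Uᵀ *ᵥ y) = ((Uᵀ * P) * (U * Uᵀ)) *ᵥ y := by
          rw [Matrix.mulVec_mulVec]; simp only [Matrix.mul_assoc]
      _ = (Uᵀ * P) *ᵥ y := by rw [hU, Matrix.mul_one]
      _ = Uᵀ *ᵥ (P *ᵥ y) := by rw [Matrix.mulVec_mulVec]
      _ = Uᵀ *ᵥ y := by rw [hPy]
  -- projection comparison
  have hcomp : ∀ t, enorm ((1 - P') *ᵥ t) ≤ enorm ((1 - Q) *ᵥ t) := by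
    intro t
    have h1 : (1 - P') *ᵥ t = t - P' *ᵥ t := by
      rw [Matrix.sub_mulVec, Matrix.one_mulVec]
    have h2 : (1 - Q) *ᵥ t = t - Q *ᵥ t := by
      rw [Matrix.sub_mulVec, Matrix.one_mulVec]
    rw [h1, h2, hQrange]
    exact enorm_sub_proj_le hP'sym hP'idem t _ (hP'Z _)
  -- splitting the diagonal
  obtain ⟨E₁, hE₁def⟩ : ∃ xx : Matrix (Fin n) (Fin n) ℝ, xx =  Matrix.diagonal (fun i => if i.1 < k then lam i ^ ((1 : ℝ)/2) else 0) := ⟨_, rfl⟩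
  obtain ⟨E₂, hE₂def⟩ : ∃ xx : Matrix (Fin n) (Fin n) ℝ, xx =  Matrix.diagonal (fun i => if i.1 < k then 0 else lam i ^ ((1 : ℝ)/2)) := ⟨_, rfl⟩
  have hsplit : Matrix.diagonal (fun i => lam i ^ ((1 : ℝ)/2)) = E₁ + E₂ := by
    rw [hE₁def, hE₂def, Matrix.diagonal_add]
    refine congrArg Matrix.diagonal (funext fun i => ?_)
    by_cases h : i.1 < k <;> simp [h]
  -- the selection matrices
  obtain ⟨Z₀, hZ₀def⟩ : ∃ xx : Matrix (Fin n) (Fin k) ℝ, xx =  Matrix.of fun i l => if i = headIdx hkn l then (1 : ℝ) else 0 := ⟨_, rfl⟩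
  obtain ⟨Bk, hBkdef⟩ : ∃ xx : Matrix (Fin k) (Fin n) ℝ, xx =  Matrix.of fun j i => if headIdx hkn j = i then lam i ^ ((1 : ℝ)/2) else 0 := ⟨_, rfl⟩
  have hE₁eq : E₁ = Z₀ * Bk := by
    ext i i'
    rw [Matrix.mul_apply, hE₁def, Matrix.diagonal_apply]
    by_cases h : i.1 < k
    · rw [Finset.sum_eq_single ⟨i.1, h⟩]
      · have hhead : headIdx hkn (⟨i.1, h⟩ : Fin k) = i := Fin.ext rfl
        rw [hZ₀def, hBkdef]
        simp only [Matrix.of_apply, hhead, if_pos rfl, one_mul]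
        by_cases hii : i = i'
        · subst hii; simp [h]
        · simp [hii, h]
      · intro b _ hb
        rw [hZ₀def]
        simp only [Matrix.of_apply]
        rw [if_neg, zero_mul]
        intro heq
        exact hb (Fin.ext (congrArg Fin.val heq).symm)
      · intro habs
        exact absurd (Finset.mem_univ _) habs
    · rw [Finset.sum_eq_zero]
      · by_cases hii : i = i'
        · rcases hii with rfl
          rw [if_pos rfl, if_neg h]
        · rw [if_neg hii]
      · intro b _
        rw [hZ₀def]
        simp only [Matrix.of_apply]
        rw [if_neg, zero_mul]
        intro heq
        have : i.1 < k := by rw [heq]; exact b.2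
        exact h this
  -- Z₀ agrees with Z on head rows, vanishes relation
  have hZ₀head : ∀ j l, Z₀ (headIdx hkn j) l = (1 : Matrix (Fin k) (Fin k) ℝ) j l := by
    intro j l
    rw [hZ₀def]
    simp only [Matrix.of_apply]
    by_cases hjl : j = l
    · subst hjl; rw [if_pos rfl, Matrix.one_apply_eq]
    · rw [if_neg, Matrix.one_apply_ne hjl]
      intro heq
      exact hjl (headIdx_injective hkn heq)
  have hZ₀tail : ∀ j l, Z₀ (tailIdx hkn j) l = 0 := by
    intro j l
    rw [hZ₀def]
    simp only [Matrix.of_apply]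
    rw [if_neg]
    intro heq
    have h1 : (tailIdx hkn j).1 = (headIdx hkn l).1 := by rw [heq]
    have h2 := l.2
    simp only [tailIdx, headIdx] at h1
    omega
  -- rows of (Z - Z₀) * Bk
  have hGrow0 : ∀ i : Fin n, i.1 < k → ∀ l, ((Z - Z₀) * Bk) i l = 0 := by
    intro i hi l
    rw [Matrix.mul_apply]
    refine Finset.sum_eq_zero fun b _ => ?_
    have hhead : headIdx hkn (⟨i.1, hi⟩ : Fin k) = i := Fin.ext rfl
    have h1 : (Z - Z₀) i b = 0 := by
      rw [Matrix.sub_apply, ← hhead, hZhead, hZ₀head, sub_self]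
    rw [h1, zero_mul]
  -- the deflated matrices
  obtain ⟨Da, hDadef⟩ : ∃ xx : Matrix (Fin (n - k)) (Fin (n - k)) ℝ, xx =  Matrix.diagonal (fun j : Fin (n - k) => lam (tailIdx hkn j) ^ ((q : ℝ) - 1)) := ⟨_, rfl⟩
  obtain ⟨Db, hDbdef⟩ : ∃ xx : Matrix (Fin k) (Fin n) ℝ, xx =  Matrix.of fun l i => if headIdx hkn l = i then lam i ^ (1 - (q : ℝ)) else 0 := ⟨_, rfl⟩
  have hGrowt : ∀ j l, ((Z - Z₀) * Bk) (tailIdx hkn j) l = (Da * F' * Db) j l := by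
    intro j l
    rw [Matrix.mul_apply, Matrix.mul_apply]
    by_cases hl : l.1 < k
    · have hheadl : headIdx hkn (⟨l.1, hl⟩ : Fin k) = l := Fin.ext rfl
      rw [Finset.sum_eq_single (⟨l.1, hl⟩ : Fin k), Finset.sum_eq_single (⟨l.1, hl⟩ : Fin k)]
      · -- main identity
        have hZv : (Z - Z₀) (tailIdx hkn j) ⟨l.1, hl⟩ = lam (tailIdx hkn j) ^ ((q : ℝ) - 1/2) *
            (Ω₂ * W) j ⟨l.1, hl⟩ * lam l ^ ((1 : ℝ)/2 - (q : ℝ)) := by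
          rw [Matrix.sub_apply, hZ₀tail, sub_zero, hZtail, hheadl]
        have hBkv : Bk (⟨l.1, hl⟩ : Fin k) l = lam l ^ ((1 : ℝ)/2) := by
          rw [hBkdef]; simp only [Matrix.of_apply]; rw [if_pos hheadl]
        have hDaF' : (Da * F') j ⟨l.1, hl⟩ = lam (tailIdx hkn j) ^ ((q : ℝ) - 1) *
            (Real.sqrt (lam (tailIdx hkn j)) * (Ω₂ * W) j ⟨l.1, hl⟩) := by
          rw [hDadef, Matrix.diagonal_mul, hF'def, Matrix.mul_assoc, Matrix.diagonal_mul]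
        have hDbv : Db (⟨l.1, hl⟩ : Fin k) l = lam l ^ (1 - (q : ℝ)) := by
          rw [hDbdef]; simp only [Matrix.of_apply]; rw [if_pos hheadl]
        rw [hZv, hBkv, hDaF', hDbv]
        have hlpos : 0 < lam l := by
          have := hheadpos (⟨l.1, hl⟩ : Fin k)
          rwa [hheadl] at this
        rw [Real.sqrt_eq_rpow]
        have e1 : lam (tailIdx hkn j) ^ ((q : ℝ) - 1/2)
            = lam (tailIdx hkn j) ^ ((q : ℝ) - 1) * lam (tailIdx hkn j) ^ ((1 : ℝ)/2) := by
          rw [show (q : ℝ) - 1/2 = ((q : ℝ) - 1) + 1/2 by ring]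
          exact Real.rpow_add' (htailnn j) (ne_of_gt (by linarith))
        have e2 : lam l ^ (1 - (q : ℝ))
            = lam l ^ ((1 : ℝ)/2 - (q : ℝ)) * lam l ^ ((1 : ℝ)/2) := by
          rw [show (1 : ℝ) - (q : ℝ) = ((1 : ℝ)/2 - (q : ℝ)) + 1/2 by ring]
          exact Real.rpow_add hlpos _ _
        rw [e1, e2]
        ring
      · intro b _ hb
        have : Db b l = 0 := by
          rw [hDbdef]; simp only [Matrix.of_apply]
          rw [if_neg]
          intro heq
          exact hb (Fin.ext (show b.1 = l.1 from congrArg Fin.val heq))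
        rw [this, mul_zero]
      · intro habs; exact absurd (Finset.mem_univ _) habs
      · intro b _ hb
        have : Bk b l = 0 := by
          rw [hBkdef]; simp only [Matrix.of_apply]
          rw [if_neg]
          intro heq
          exact hb (Fin.ext (show b.1 = l.1 from congrArg Fin.val heq))
        rw [this, mul_zero]
      · intro habs; exact absurd (Finset.mem_univ _) habs
    · rw [Finset.sum_eq_zero, Finset.sum_eq_zero]
      · intro b _
        have : Db b l = 0 := by
          rw [hDbdef]; simp only [Matrix.of_apply]
          rw [if_neg]
          intro heq
          exact hl (by rw [← heq]; exact b.2)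
        rw [this, mul_zero]
      · intro b _
        have : Bk b l = 0 := by
          rw [hBkdef]; simp only [Matrix.of_apply]
          rw [if_neg]
          intro heq
          exact hl (by rw [← heq]; exact b.2)
        rw [this, mul_zero]
  -- the key estimate
  have hkey : ∀ v, enorm (((1 - P) * apow U lam (1/2)) *ᵥ v) ≤ c * enorm v := by
    intro v
    obtain ⟨w, hwdef⟩ : ∃ xx : Fin n → ℝ, xx = Uᵀ *ᵥ v := ⟨_, rfl⟩
    have hwnorm : enorm w = enorm v := by
      subst hwdef
      exact enorm_orth (by rw [Matrix.transpose_transpose, hU]) v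
    have hS : apow U lam (1/2) = U * Matrix.diagonal (fun i => lam i ^ ((1 : ℝ)/2)) * Uᵀ := by
      rw [apow]
    have hid : ((1 - P) * apow U lam (1/2)) *ᵥ v
        = (1 - P) *ᵥ (U *ᵥ (Matrix.diagonal (fun i => lam i ^ ((1 : ℝ)/2)) *ᵥ w)) := by
      rw [hwdef, Matrix.mulVec_mulVec, Matrix.mulVec_mulVec, Matrix.mulVec_mulVec, hS]
      simp only [Matrix.mul_assoc]
    have hP'mat : (1 : Matrix (Fin n) (Fin n) ℝ) - P' = Uᵀ * ((1 - P) * U) := by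
      rw [Matrix.sub_mul, Matrix.one_mul, Matrix.mul_sub, hU', hP'def, Matrix.mul_assoc]
    have hrot : enorm (((1 - P) * apow U lam (1/2)) *ᵥ v)
        = enorm ((1 - P') *ᵥ (Matrix.diagonal (fun i => lam i ^ ((1 : ℝ)/2)) *ᵥ w)) := by
      rw [hid]
      rw [← enorm_orth (U := Uᵀ) (by rw [Matrix.transpose_transpose, hU])
        ((1 - P) *ᵥ (U *ᵥ (Matrix.diagonal (fun i => lam i ^ ((1 : ℝ)/2)) *ᵥ w)))]
      congr 1
      rw [hP'mat]
      simp only [← Matrix.mulVec_mulVec]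
    rw [hrot]
    refine le_trans (hcomp _) ?_
    -- split D₁ w into E₁ w + E₂ w
    rw [hsplit, Matrix.add_mulVec, Matrix.mulVec_add]
    refine le_trans (enorm_add_le _ _) ?_
    -- second term
    have hT2 : enorm ((1 - Q) *ᵥ (E₂ *ᵥ w)) ≤ Real.sqrt lamk1 * enorm w := by
      refine le_trans (enorm_proj_le h1Qsym h1Qidem _) ?_
      rw [hE₂def]
      refine enorm_diagonal_le (Real.sqrt_nonneg _) (fun i => ?_) w
      show |if (i : ℕ) < k then (0 : ℝ) else lam i ^ ((1 : ℝ)/2)| ≤ Real.sqrt lamk1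
      by_cases h : i.1 < k
      · rw [if_pos h, abs_zero]
        exact Real.sqrt_nonneg _
      · rw [if_neg h, abs_of_nonneg (Real.rpow_nonneg (hlam0 i) _), Real.sqrt_eq_rpow]
        refine Real.rpow_le_rpow (hlam0 i) ?_ (by norm_num)
        rw [hlamk1def]
        refine hlam ?_
        show (⟨k, hkn⟩ : Fin n) ≤ i
        rw [Fin.le_def]
        exact le_of_not_gt h
    -- first term
    have hT1 : enorm ((1 - Q) *ᵥ (E₁ *ᵥ w)) ≤ (lamk1 / lamk) ^ (q - 1) * specNorm F' * enorm w := by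
      have hQE₁ : (1 - Q) * E₁ = -((1 - Q) * ((Z - Z₀) * Bk)) := by
        rw [hE₁eq, ← Matrix.mul_assoc, ← Matrix.mul_assoc]
        have h1 : (1 - Q) * Z₀ = -((1 - Q) * (Z - Z₀)) := by
          rw [Matrix.mul_sub, h1QZ, zero_sub, neg_neg]
        rw [h1, Matrix.neg_mul]
      have step1 : enorm ((1 - Q) *ᵥ (E₁ *ᵥ w)) = enorm ((1 - Q) *ᵥ (((Z - Z₀) * Bk) *ᵥ w)) := by
        rw [Matrix.mulVec_mulVec, hQE₁, Matrix.neg_mulVec, enorm_neg, ← Matrix.mulVec_mulVec]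
      rw [step1]
      refine le_trans (enorm_proj_le h1Qsym h1Qidem _) ?_
      rw [enorm_mulVec_emb hkn ((Z - Z₀) * Bk) (Da * F' * Db) hGrow0 hGrowt w]
      -- now bound the deflated product
      have hDa_bound : ∀ j, |lam (tailIdx hkn j) ^ ((q : ℝ) - 1)| ≤ lamk1 ^ (q - 1) := by
        intro j
        rw [abs_of_nonneg (Real.rpow_nonneg (htailnn j) _)]
        calc lam (tailIdx hkn j) ^ ((q : ℝ) - 1) ≤ lamk1 ^ ((q : ℝ) - 1) :=
              Real.rpow_le_rpow (htailnn j) (htail_le j) (by linarith)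
          _ = lamk1 ^ (q - 1) := by rw [← hm, Real.rpow_natCast]
      have hmulchain : enorm ((Da * F' * Db) *ᵥ w)
          ≤ lamk1 ^ (q - 1) * (specNorm F' * ((lamk ^ (q - 1))⁻¹ * enorm w)) := by
        rw [hDadef, ← Matrix.mulVec_mulVec, ← Matrix.mulVec_mulVec]
        refine le_trans (enorm_diagonal_le (pow_nonneg hlamk1nn _) hDa_bound _) ?_
        refine mul_le_mul_of_nonneg_left ?_ (pow_nonneg hlamk1nn _)
        refine le_trans (enorm_mulVec_le F' _) ?_
        refine mul_le_mul_of_nonneg_left ?_ (specNorm_nonneg _)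
        -- bound enorm (Db *ᵥ w)
        have hDbw : Db *ᵥ w = Matrix.diagonal (fun l : Fin k => lam (headIdx hkn l) ^ (1 - (q : ℝ)))
            *ᵥ (fun l => w (headIdx hkn l)) := by
          funext l
          rw [Matrix.mulVec_diagonal]
          calc (Db *ᵥ w) l = ∑ i, Db l i * w i := rfl
            _ = lam (headIdx hkn l) ^ (1 - (q : ℝ)) * w (headIdx hkn l) := by
                rw [Finset.sum_eq_single (headIdx hkn l)]
                · rw [hDbdef]; simp
                · intro b _ hb
                  rw [hDbdef]; simp only [Matrix.of_apply]
                  rw [if_neg (fun heq => hb heq.symm), zero_mul]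
                · intro habs; exact absurd (Finset.mem_univ _) habs
        rw [hDbw]
        have hdb_bound : ∀ l, |lam (headIdx hkn l) ^ (1 - (q : ℝ))| ≤ (lamk ^ (q - 1))⁻¹ := by
          intro l
          rw [abs_of_nonneg (Real.rpow_nonneg (le_of_lt (hheadpos l)) _)]
          calc lam (headIdx hkn l) ^ (1 - (q : ℝ)) ≤ lamk ^ (1 - (q : ℝ)) :=
                Real.rpow_le_rpow_of_nonpos hlamkpos' (hlamk_le_head l) (by linarith)
            _ = (lamk ^ (q - 1))⁻¹ := by
                rw [show (1 - (q : ℝ)) = -((q : ℝ) - 1) by ring, Real.rpow_neg hlamknn,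
                  ← hm, Real.rpow_natCast]
        refine le_trans (enorm_diagonal_le (inv_nonneg.2 (pow_nonneg hlamknn _)) hdb_bound _) ?_
        refine mul_le_mul_of_nonneg_left ?_ (inv_nonneg.2 (pow_nonneg hlamknn _))
        refine enorm_le_enorm ?_
        exact sum_head_le hkn (fun i => w i * w i) fun i => mul_self_nonneg _
      refine le_trans hmulchain (le_of_eq ?_)
      have hlamkm : (lamk : ℝ) ^ (q - 1) ≠ 0 := pow_ne_zero _ (ne_of_gt hlamkpos')
      rw [div_pow]
      field_simp
    calc enorm ((1 - Q) *ᵥ (E₁ *ᵥ w)) + enorm ((1 - Q) *ᵥ (E₂ *ᵥ w))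
        ≤ (lamk1 / lamk) ^ (q - 1) * specNorm F' * enorm w + Real.sqrt lamk1 * enorm w :=
          add_le_add hT1 hT2
      _ = c * enorm w := by rw [hcdef]; ring
      _ = c * enorm v := by rw [hwnorm]
  -- conclude via the Powers–Størmer style bound
  have hSsym : (apow U lam (1/2))ᵀ = apow U lam (1/2) := by
    rw [apow, Matrix.transpose_mul, Matrix.transpose_mul, Matrix.transpose_transpose,
      Matrix.diagonal_transpose, Matrix.mul_assoc]
  have hSpsd : (apow U lam (1/2)).PosSemidef := by
    rw [apow]
    exact psd_conj (fun i => Real.rpow_nonneg (hlam0 i) _) U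
  have hEq : apow U lam (1/2) * apow U lam (1/2) - Shat * Shat
      = apow U lam (1/2) * (1 - P) * apow U lam (1/2) := by
    rw [hShatsq, hAhat, Matrix.mul_sub, Matrix.mul_one, Matrix.sub_mul]
  have final : specNorm (apow U lam (1/2) - Shat) ≤ c :=
    specNorm_le _ hcnn (sqrt_diff_bound hSsym hSpsd hShat hP.1 hP.2.1 hEq hcnn hkey)
  rw [hcdef, hF'def, hWdef, hlamk1def, hlamkdef] at final
  exact final


end FunNystrom
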